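/- Let X = ℝ² with the supremum norm ‖(x₁,x₂)‖∞ = max(|x₁|,|x₂|). Then sup{ ‖u+v‖∞ / inf_{0<γ<1/2} ‖γu+(1−γ)v‖∞ : u, v ∈ ℝ², ‖u‖∞ = ‖v‖∞ = 1, u+v ≠ 0 } = 4; moreover, for every such pair u, v, the quotient ‖u+v‖∞ / inf_{0<γ<1/2} ‖γu+(1−γ)v‖∞ is strictly less than 4. -/
import Mathlib

/-- The supremum norm on `ℝ²`. -/
noncomputable def supNorm (x : ℝ × ℝ) : ℝ := max |x.1| |x.2|

/-- The quotient `‖u+v‖∞ / inf_{0<γ<1/2} ‖γu+(1−γ)v‖∞`. -/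
noncomputable def dwQuot (u v : ℝ × ℝ) : ℝ :=
  supNorm (u + v) /
    sInf {r : ℝ | ∃ γ : ℝ, 0 < γ ∧ γ < 1/2 ∧ r = supNorm (γ • u + (1 - γ) • v)}

/-- `supNorm` is the product norm on `ℝ × ℝ`. -/
lemma supNorm_eq (x : ℝ × ℝ) : supNorm x = ‖x‖ := by
  simp [supNorm, Prod.norm_def, Real.norm_eq_abs]

/-- Key inequality: `t ≤ (4-t) * ‖γ•u+(1-γ)•v‖` for unit `u`, `v` and `γ ∈ (0,1/2)`. -/
lemma dw_key (u v : ℝ × ℝ) (hu : ‖u‖ = 1) (hv : ‖v‖ = 1) (γ : ℝ)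
    (h1 : 0 < γ) (h2 : γ < 1/2) :
    ‖u + v‖ ≤ (4 - ‖u + v‖) * ‖γ • u + (1 - γ) • v‖ := by
  set t := ‖u + v‖ with ht
  set f := ‖γ • u + (1 - γ) • v‖ with hf
  have ht2 : t ≤ 2 := by
    calc t ≤ ‖u‖ + ‖v‖ := norm_add_le _ _
    _ = 2 := by rw [hu, hv]; norm_num
  have hA : 1 - 2*γ ≤ f := by
    have e : (1 - γ) • v = (γ • u + (1 - γ) • v) + (-γ) • u := by module
    have := norm_add_le (γ • u + (1 - γ) • v) ((-γ) • u)
    rw [← e, norm_smul, norm_smul, hu, hv] at this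
    simp [Real.norm_eq_abs, abs_of_pos h1, abs_of_pos (by linarith : (0:ℝ) < 1 - γ)] at this
    linarith
  have hB : (1 - γ) * t - (1 - 2*γ) ≤ f := by
    have e : (1 - γ) • (u + v) = (1 - 2*γ) • u + (γ • u + (1 - γ) • v) := by module
    have := norm_add_le ((1 - 2*γ) • u) (γ • u + (1 - γ) • v)
    rw [← e, norm_smul, norm_smul, hu] at this
    simp [Real.norm_eq_abs, abs_of_pos (by linarith : (0:ℝ) < 1 - 2*γ),
      abs_of_pos (by linarith : (0:ℝ) < 1 - γ)] at this
    linarith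
  nlinarith [hA, hB, ht2]

/-- Lower bound on the infimum in `dwQuot`. -/
lemma dw_sInf_ge (u v : ℝ × ℝ) (hu : supNorm u = 1) (hv : supNorm v = 1) :
    ‖u + v‖ / (4 - ‖u + v‖) ≤
      sInf {r : ℝ | ∃ γ : ℝ, 0 < γ ∧ γ < 1/2 ∧ r = supNorm (γ • u + (1 - γ) • v)} := by
  rw [supNorm_eq] at hu hv
  have ht2 : ‖u + v‖ ≤ 2 := by
    calc ‖u + v‖ ≤ ‖u‖ + ‖v‖ := norm_add_le _ _
    _ = 2 := by rw [hu, hv]; norm_num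
  have h4 : 0 < 4 - ‖u + v‖ := by linarith
  apply le_csInf
  · exact ⟨supNorm ((1/4 : ℝ) • u + (1 - 1/4) • v), 1/4, by norm_num, by norm_num, rfl⟩
  · rintro r ⟨γ, hγ1, hγ2, rfl⟩
    rw [supNorm_eq, div_le_iff₀ h4]
    calc ‖u + v‖ ≤ (4 - ‖u + v‖) * ‖γ • u + (1 - γ) • v‖ := dw_key u v hu hv γ hγ1 hγ2
    _ = ‖γ • u + (1 - γ) • v‖ * (4 - ‖u + v‖) := mul_comm _ _

/-- Strict upper bound: the quotient is at most `4 - ‖u+v‖`. -/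
lemma dw_quot_le (u v : ℝ × ℝ) (hu : supNorm u = 1) (hv : supNorm v = 1) (huv : u + v ≠ 0) :
    dwQuot u v ≤ 4 - supNorm (u + v) := by
  have ht0 : 0 < ‖u + v‖ := norm_pos_iff.mpr huv
  have ht2 : ‖u + v‖ ≤ 2 := by
    rw [supNorm_eq] at hu hv
    calc ‖u + v‖ ≤ ‖u‖ + ‖v‖ := norm_add_le _ _
    _ = 2 := by rw [hu, hv]; norm_num
  have h4 : 0 < 4 - ‖u + v‖ := by linarith
  have hge := dw_sInf_ge u v hu hv
  have hpos : 0 < ‖u + v‖ / (4 - ‖u + v‖) := div_pos ht0 h4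
  rw [dwQuot, supNorm_eq]
  rw [div_le_iff₀ (lt_of_lt_of_le hpos hge)]
  calc ‖u + v‖ = (4 - ‖u + v‖) * (‖u + v‖ / (4 - ‖u + v‖)) := by field_simp
  _ ≤ (4 - ‖u + v‖) * sInf _ := mul_le_mul_of_nonneg_left hge (le_of_lt h4)

/-- The explicit family of pairs realizing values `4 - δ`. -/
lemma dw_example (δ : ℝ) (hδ0 : 0 < δ) (hδ1 : δ ≤ 1) :
    supNorm ((1, 1) : ℝ × ℝ) = 1 ∧ supNorm ((δ - 1, -1) : ℝ × ℝ) = 1 ∧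
      ((1, 1) : ℝ × ℝ) + (δ - 1, -1) ≠ 0 ∧ dwQuot (1, 1) (δ - 1, -1) = 4 - δ := by
  have hu : supNorm ((1, 1) : ℝ × ℝ) = 1 := by simp [supNorm]
  have hv : supNorm ((δ - 1, -1) : ℝ × ℝ) = 1 := by
    simp only [supNorm]
    rw [abs_of_nonpos (by linarith), abs_neg, abs_one]
    rw [max_eq_right (by linarith)]
  have hsum : ((1, 1) : ℝ × ℝ) + (δ - 1, -1) = (δ, 0) := by
    simp [Prod.ext_iff]
  have hne : ((1, 1) : ℝ × ℝ) + (δ - 1, -1) ≠ 0 := by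
    rw [hsum]; intro h
    rw [Prod.ext_iff] at h
    exact absurd h.1 (by simpa using hδ0.ne')
  have htv : supNorm (((1, 1) : ℝ × ℝ) + (δ - 1, -1)) = δ := by
    rw [hsum]; simp [supNorm, abs_of_pos hδ0, le_of_lt hδ0]
  refine ⟨hu, hv, hne, ?_⟩
  set S := {r : ℝ | ∃ γ : ℝ, 0 < γ ∧ γ < 1/2 ∧
    r = supNorm (γ • ((1, 1) : ℝ × ℝ) + (1 - γ) • (δ - 1, -1))} with hS
  have h4 : (0 : ℝ) < 4 - δ := by linarith
  have hmem : δ / (4 - δ) ∈ S := by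
    refine ⟨(2 - δ)/(4 - δ), div_pos (by linarith) h4, ?_, ?_⟩
    · rw [div_lt_iff₀ h4]; linarith
    · have hco : ((2 - δ)/(4 - δ)) • ((1, 1) : ℝ × ℝ)
          + (1 - (2 - δ)/(4 - δ)) • ((δ - 1, -1) : ℝ × ℝ)
          = (δ/(4 - δ), -(δ/(4 - δ))) := by
        simp only [Prod.smul_mk, Prod.mk_add_mk, smul_eq_mul, Prod.mk.injEq]
        constructor <;> field_simp <;> ring
      rw [hco]
      simp only [supNorm, abs_neg]
      simp [abs_of_nonneg (le_of_lt (div_pos hδ0 h4))]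
  have hbdd : BddBelow S := by
    refine ⟨0, ?_⟩
    rintro r ⟨γ, _, _, rfl⟩
    rw [supNorm_eq]; exact norm_nonneg _
  have hle : sInf S ≤ δ / (4 - δ) := csInf_le hbdd hmem
  have hge : δ / (4 - δ) ≤ sInf S := by
    have := dw_sInf_ge (1, 1) (δ - 1, -1) hu hv
    rwa [← supNorm_eq, htv] at this
  have hsInf : sInf S = δ / (4 - δ) := le_antisymm hle hge
  rw [dwQuot, htv, ← hS, hsInf]
  field_simp

/-- For `ℝ²` with the supremum norm, the Dunkl–Williams constant equals `4`,
and the supremum is not attained at any pair of unit vectors. -/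
theorem dunkl_williams_sup_norm :
    sSup {c : ℝ | ∃ u v : ℝ × ℝ, supNorm u = 1 ∧ supNorm v = 1 ∧ u + v ≠ 0 ∧
      c = dwQuot u v} = 4 ∧
    ∀ u v : ℝ × ℝ, supNorm u = 1 → supNorm v = 1 → u + v ≠ 0 → dwQuot u v < 4 := by
  have hlt : ∀ u v : ℝ × ℝ, supNorm u = 1 → supNorm v = 1 → u + v ≠ 0 → dwQuot u v < 4 := by
    intro u v hu hv huv
    have h := dw_quot_le u v hu hv huv
    have ht0 : 0 < ‖u + v‖ := norm_pos_iff.mpr huv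
    rw [← supNorm_eq] at ht0
    linarith
  refine ⟨?_, hlt⟩
  set T := {c : ℝ | ∃ u v : ℝ × ℝ, supNorm u = 1 ∧ supNorm v = 1 ∧ u + v ≠ 0 ∧
      c = dwQuot u v} with hT
  have hmemδ : ∀ δ : ℝ, 0 < δ → δ ≤ 1 → (4 - δ) ∈ T := by
    intro δ h0 h1
    obtain ⟨hu, hv, hne, hq⟩ := dw_example δ h0 h1
    exact ⟨(1, 1), (δ - 1, -1), hu, hv, hne, hq.symm⟩
  have hbddT : ∀ c ∈ T, c ≤ 4 := by
    rintro c ⟨u, v, hu, hv, huv, rfl⟩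
    exact le_of_lt (hlt u v hu hv huv)
  apply le_antisymm
  · exact csSup_le ⟨4 - 1, hmemδ 1 one_pos le_rfl⟩ hbddT
  · apply le_of_forall_lt
    intro c hc
    set δ := min ((4 - c)/2) 1 with hδ
    have hδ0 : 0 < δ := lt_min (by linarith) one_pos
    have hδ1 : δ ≤ 1 := min_le_right _ _
    have hcδ : c < 4 - δ := by
      rcases min_cases ((4 - c)/2) 1 with ⟨h, hle⟩ | ⟨h, hlt'⟩
      · rw [hδ, h]; linarith
      · rw [hδ, h]; linarith
    calc c < 4 - δ := hcδ
    _ ≤ sSup T := le_csSup ⟨4, hbddT⟩ (hmemδ δ hδ0 hδ1)
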